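/- arXiv:2211.10385 — 4 statements merged into one kernel-verified Lean document; each statement's English description precedes it below -/
import Mathlib

section
/- Let X = {x_1 < x_2 < ... < x_t} be a subset of the leaves {1, ..., 2^N} of the complete binary tree of height N, and let a(X) = {a(x_i, x_{i+1}) : 1 ≤ i ≤ t-1} be the set of greatest common ancestors of consecutive elements. If X and Y are subsets of the leaves with a(X) = a(Y), then |X| = |Y|, and moreover writing X = {x_1 < ... < x_t}, Y = {y_1 < ... < y_t}, one has a(x_i, x_{i+1}) = a(y_i, y_{i+1}) for every 1 ≤ i ≤ t-1. -/
open Finset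

/-- Encoding of the greatest common ancestor `a(x,y)` of leaves `x, y ∈ {1,…,2^N}`
of the complete binary tree of height `N`: the pair (common-prefix length,
the common prefix of the `N`-bit representations of `x-1` and `y-1`). -/
def treeAnc (N x y : ℕ) : ℕ × ℕ :=
  (N - Nat.size ((x - 1) ^^^ (y - 1)), (x - 1) >>> (Nat.size ((x - 1) ^^^ (y - 1))))

/-- The list `a(x_1,x_2), a(x_2,x_3), …` of greatest common ancestors of
consecutive elements of `X = {x_1 < x_2 < ⋯}`. -/
def ancList (N : ℕ) (X : Finset ℕ) : List (ℕ × ℕ) :=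
  List.zipWith (treeAnc N) (X.sort (· ≤ ·)) (X.sort (· ≤ ·)).tail

/-- The split point of an ancestor node. -/
def splitPt (N : ℕ) (a : ℕ × ℕ) : ℕ := a.2 * 2 ^ (N - a.1) + 2 ^ (N - a.1 - 1)

lemma two_pow_le_of_testBit {m i : ℕ} (h : m.testBit i = true) : 2 ^ i ≤ m := by
  rw [Nat.testBit_eq_decide_div_mod_eq, decide_eq_true_eq] at h
  have h1 : 1 ≤ m / 2 ^ i := by
    rcases Nat.eq_zero_or_pos (m / 2 ^ i) with h0 | h0
    · rw [h0] at h; simp at h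
    · exact h0
  exact (Nat.one_le_div_iff (Nat.pow_pos (by norm_num))).mp h1

lemma lt_of_testBit_false {m i : ℕ} (hm : m < 2 ^ (i + 1)) (h : m.testBit i = false) :
    m < 2 ^ i := by
  rw [Nat.testBit_eq_decide_div_mod_eq, decide_eq_false_iff_not] at h
  have h2 : m / 2 ^ i < 2 := Nat.div_lt_of_lt_mul (by rw [pow_succ] at hm; omega)
  by_contra hge
  have hge' : 2 ^ i ≤ m := le_of_not_gt hge
  have h1 : 1 ≤ m / 2 ^ i :=
    (Nat.one_le_div_iff (Nat.pow_pos (by norm_num))).mpr hge'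
  obtain ⟨q, hq⟩ : ∃ q, m / 2 ^ i = q := ⟨_, rfl⟩
  rw [hq] at h h2 h1
  omega

/-- Key lemma: the split point lies in the gap. -/
lemma splitPt_mem (N x y : ℕ) (h1 : 1 ≤ x) (hxy : x < y) (hy : y ≤ 2 ^ N) :
    x - 1 < splitPt N (treeAnc N x y) ∧ splitPt N (treeAnc N x y) ≤ y - 1 := by
  set b := x - 1 with hb
  set c := y - 1 with hc
  have hbc : b < c := by omega
  have hcN : c < 2 ^ N := by omega
  have hbN : b < 2 ^ N := lt_trans hbc hcN
  set k := Nat.size (b ^^^ c) with hk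
  have hk1 : 1 ≤ k := Nat.size_pos.mpr (Nat.pos_of_ne_zero (by
    intro h0; exact absurd (by have := congrArg (· ^^^ c) h0; simpa [Nat.xor_assoc] using this) (Nat.ne_of_lt hbc)))
  have hkN : k ≤ N := Nat.size_le.mpr (Nat.xor_lt_two_pow hbN hcN)
  have hxor_lt : b ^^^ c < 2 ^ k := Nat.lt_size_self _
  have hxor_ge : 2 ^ (k - 1) ≤ b ^^^ c := Nat.lt_size.mp (by omega)
  -- bits of xor
  have hxorbit : (b ^^^ c).testBit (k - 1) = true := by
    rw [Nat.testBit_eq_decide_div_mod_eq, decide_eq_true_eq]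
    have h2 : b ^^^ c < 2 ^ (k - 1) * 2 := by
      rw [← pow_succ]; have : k - 1 + 1 = k := by omega
      rw [this]; exact hxor_lt
    have := Nat.div_lt_of_lt_mul h2
    have h3 : 1 ≤ (b ^^^ c) / 2 ^ (k - 1) := (Nat.one_le_div_iff (Nat.pow_pos (by norm_num))).mpr hxor_ge
    omega
  have hagree : ∀ j, k - 1 < j → b.testBit j = c.testBit j := by
    intro j hj
    have : (b ^^^ c).testBit j = false := Nat.testBit_lt_two_pow
      (lt_of_lt_of_le hxor_lt (Nat.pow_le_pow_right (by norm_num) (by omega)))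
    rw [Nat.testBit_xor] at this
    revert this
    cases b.testBit j <;> cases c.testBit j <;> simp
  have hbitne : b.testBit (k - 1) ≠ c.testBit (k - 1) := by
    intro heq
    rw [Nat.testBit_xor, heq] at hxorbit
    revert hxorbit
    cases c.testBit (k - 1) <;> simp
  have hbitb : b.testBit (k - 1) = false := by
    by_contra hbt
    have hbt' : b.testBit (k - 1) = true := by
      cases hbb : b.testBit (k - 1) with
      | false => exact absurd hbb hbt
      | true => rfl
    have hct : c.testBit (k - 1) = false := by
      cases hcb : c.testBit (k - 1) with
      | false => rfl
      | true => exact absurd (hbt'.trans hcb.symm) hbitne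
    have : c < b := Nat.lt_of_testBit (k - 1) hct hbt' (fun j hj => (hagree j hj).symm)
    omega
  have hbitc : c.testBit (k - 1) = true := by
    cases hcb : c.testBit (k - 1) with
    | false => exact absurd (hbitb.trans hcb.symm) hbitne
    | true => rfl
  -- same high bits
  have hq : b >>> k = c >>> k := by
    apply Nat.eq_of_testBit_eq
    intro i
    rw [Nat.testBit_shiftRight, Nat.testBit_shiftRight]
    exact hagree (k + i) (by omega)
  -- compute splitPt
  have hNk : N - (N - k) = k := by omega
  have hsp : splitPt N (treeAnc N x y) = (b >>> k) * 2 ^ k + 2 ^ (k - 1) := by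
    simp only [splitPt, treeAnc, ← hb, ← hc, ← hk, hNk]
  rw [hsp]
  have hdm_b : b = 2 ^ k * (b / 2 ^ k) + b % 2 ^ k := (Nat.div_add_mod b (2 ^ k)).symm
  have hdm_c : c = 2 ^ k * (c / 2 ^ k) + c % 2 ^ k := (Nat.div_add_mod c (2 ^ k)).symm
  have hsb : b >>> k = b / 2 ^ k := Nat.shiftRight_eq_div_pow b k
  have hsc : c >>> k = c / 2 ^ k := Nat.shiftRight_eq_div_pow c k
  constructor
  · -- b < split : b % 2^k < 2^(k-1)
    have hmod_lt : b % 2 ^ k < 2 ^ (k - 1) := by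
      apply lt_of_testBit_false
      · have : k - 1 + 1 = k := by omega
        rw [this]; exact Nat.mod_lt _ (Nat.pow_pos (by norm_num))
      · rw [Nat.testBit_mod_two_pow, hbitb]
        simp
    calc b = 2 ^ k * (b / 2 ^ k) + b % 2 ^ k := hdm_b
      _ < 2 ^ k * (b / 2 ^ k) + 2 ^ (k - 1) := Nat.add_lt_add_left hmod_lt _
      _ = (b >>> k) * 2 ^ k + 2 ^ (k - 1) := by rw [hsb, Nat.mul_comm]
  · -- split ≤ c : 2^(k-1) ≤ c % 2^k
    have hmod_ge : 2 ^ (k - 1) ≤ c % 2 ^ k := by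
      apply two_pow_le_of_testBit
      rw [Nat.testBit_mod_two_pow, hbitc]
      simp
      omega
    calc (b >>> k) * 2 ^ k + 2 ^ (k - 1)
        = 2 ^ k * (c / 2 ^ k) + 2 ^ (k - 1) := by rw [hq, hsc, Nat.mul_comm]
      _ ≤ 2 ^ k * (c / 2 ^ k) + c % 2 ^ k := Nat.add_le_add_left hmod_ge _
      _ = c := hdm_c.symm

/-- The ancestor list is strictly increasing in split points. -/
lemma ancList_chain (N : ℕ) (X : Finset ℕ) (hX : X ⊆ Finset.Icc 1 (2 ^ N)) :
    List.Chain' (fun a b => splitPt N a < splitPt N b) (ancList N X) := by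
  unfold List.Chain'
  have hsorted : List.Pairwise (· < ·) (X.sort (· ≤ ·)) :=
    ((Finset.pairwise_sort X (· ≤ ·)).and (Finset.sort_nodup X (· ≤ ·))).imp (fun h => lt_of_le_of_ne h.1 h.2)
  have hmem : ∀ x ∈ X.sort (· ≤ ·), 1 ≤ x ∧ x ≤ 2 ^ N := by
    intro x hx
    have := hX (Finset.mem_sort (· ≤ ·) |>.mp hx)
    exact Finset.mem_Icc.mp this
  rw [ancList]
  generalize hl : X.sort (· ≤ ·) = l at hsorted hmem
  clear hl hX
  induction l with
  | nil => simp
  | cons a t ih =>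
    cases t with
    | nil => simp
    | cons b t' =>
      cases t' with
      | nil => simp
      | cons c t'' =>
        simp only [List.tail_cons, List.zipWith_cons_cons]
        rw [List.isChain_cons_cons]
        constructor
        · have hab : a < b := (List.pairwise_cons.mp hsorted).1 b (by simp)
          have hbc : b < c := ((List.pairwise_cons.mp (List.pairwise_cons.mp hsorted).2).1 c (by simp))
          have ha := hmem a (by simp)
          have hb := hmem b (by simp)
          have hc := hmem c (by simp)
          have h1 := splitPt_mem N a b ha.1 hab hb.2
          have h2 := splitPt_mem N b c hb.1 hbc hc.2
          omega
        · have := ih (List.pairwise_cons.mp hsorted).2 (fun x hx => hmem x (by simp [hx]))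
          simpa using this

lemma ancList_eq_of_toFinset_eq (N : ℕ) (X Y : Finset ℕ)
    (hX : X ⊆ Finset.Icc 1 (2 ^ N)) (hY : Y ⊆ Finset.Icc 1 (2 ^ N))
    (h : (ancList N X).toFinset = (ancList N Y).toFinset) :
    ancList N X = ancList N Y := by
  set r : ℕ × ℕ → ℕ × ℕ → Prop := fun a b => splitPt N a < splitPt N b with hr
  haveI : IsTrans (ℕ × ℕ) r := ⟨fun a b c hab hbc => lt_trans hab hbc⟩
  haveI : IsAntisymm (ℕ × ℕ) r := ⟨fun a b hab hba => absurd (lt_trans hab hba) (lt_irrefl _)⟩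
  have hpX : List.Pairwise r (ancList N X) := List.isChain_iff_pairwise.mp (ancList_chain N X hX)
  have hpY : List.Pairwise r (ancList N Y) := List.isChain_iff_pairwise.mp (ancList_chain N Y hY)
  have hnX : (ancList N X).Nodup := hpX.imp (fun hab => by
    intro heq; subst heq; exact absurd hab (lt_irrefl _))
  have hnY : (ancList N Y).Nodup := hpY.imp (fun hab => by
    intro heq; subst heq; exact absurd hab (lt_irrefl _))
  exact List.Perm.eq_of_pairwise (fun a b _ _ hab hba => absurd (lt_trans hab hba) (lt_irrefl _)) hpX hpY (List.perm_of_nodup_nodup_toFinset_eq hnX hnY h)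

/-- If `X` and `Y` are nonempty subsets of the leaves `{1,…,2^N}` with
`a(X) = a(Y)`, then `|X| = |Y|` and moreover `a(x_i,x_{i+1}) = a(y_i,y_{i+1})`
for every `i` (the lists of consecutive ancestors coincide). -/
theorem anc_set_determines_shape (N : ℕ) (X Y : Finset ℕ)
    (hX : X ⊆ Finset.Icc 1 (2 ^ N)) (hY : Y ⊆ Finset.Icc 1 (2 ^ N))
    (hXne : X.Nonempty) (hYne : Y.Nonempty)
    (h : (ancList N X).toFinset = (ancList N Y).toFinset) :
    X.card = Y.card ∧ ancList N X = ancList N Y := by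
  have heq : ancList N X = ancList N Y := ancList_eq_of_toFinset_eq N X Y hX hY h
  refine ⟨?_, heq⟩
  have hlen : (ancList N X).length = (ancList N Y).length := by rw [heq]
  have hlX : (ancList N X).length = X.card - 1 := by
    rw [ancList, List.length_zipWith, List.length_tail, Finset.length_sort]
    omega
  have hlY : (ancList N Y).length = Y.card - 1 := by
    rw [ancList, List.length_zipWith, List.length_tail, Finset.length_sort]
    omega
  have hcX : 1 ≤ X.card := Finset.Nonempty.card_pos hXne
  have hcY : 1 ≤ Y.card := Finset.Nonempty.card_pos hYne
  omega
end

section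
/- For all integers r > k ≥ 0 and m, the daisy Ramsey number satisfies D_r(m,k) ≥ R_{r-k}(⌈m/(k+1)⌉ - k), where R_s denotes the 2-color Ramsey number for s-uniform complete hypergraphs. -/
/-- The coloring `c` is monochromatic on the `r`-subsets of `S`. -/
def IsMonoOn (c : Finset ℕ → Bool) (r : ℕ) (S : Finset ℕ) : Prop :=
  ∃ col : Bool, ∀ P ⊆ S, P.card = r → c P = col

/-- `R_r(m)`: the least `N` such that every 2-coloring of the `r`-subsets of
`{1,…,N}` admits a monochromatic set of size `m`. -/
noncomputable def ramseyNumber (r m : ℕ) : ℕ :=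
  sInf {N : ℕ | ∀ c : Finset ℕ → Bool,
    ∃ S ⊆ Finset.Icc 1 N, S.card = m ∧ IsMonoOn c r S}

/-- The coloring `c` admits a monochromatic `(r,m,k)`-daisy inside `{1,…,N}`. -/
def HasMonoDaisy (r m k N : ℕ) (c : Finset ℕ → Bool) : Prop :=
  ∃ K M : Finset ℕ, K ∪ M ⊆ Finset.Icc 1 N ∧ Disjoint K M ∧
    K.card = k ∧ M.card = m ∧
    ∃ col : Bool, ∀ P ⊆ M, P.card = r → c (K ∪ P) = col

/-- `D_r(m,k)`: the daisy Ramsey number. -/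
noncomputable def daisyRamsey (r m k : ℕ) : ℕ :=
  sInf {N : ℕ | ∀ c : Finset ℕ → Bool, HasMonoDaisy r m k N c}

/-- The coloring `c` admits a monochromatic simple `(r,m,k)`-daisy inside `{1,…,N}`:
the kernel splits as `K₀ ∪ K₁` with `K₀ < M < K₁`. -/
def HasMonoSimpleDaisy (r m k N : ℕ) (c : Finset ℕ → Bool) : Prop :=
  ∃ K₀ M K₁ : Finset ℕ, K₀ ∪ M ∪ K₁ ⊆ Finset.Icc 1 N ∧
    (∀ x ∈ K₀, ∀ y ∈ M, x < y) ∧ (∀ y ∈ M, ∀ z ∈ K₁, y < z) ∧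
    (∀ x ∈ K₀, ∀ z ∈ K₁, x < z) ∧
    (K₀ ∪ K₁).card = k ∧ M.card = m ∧
    ∃ col : Bool, ∀ P ⊆ M, P.card = r → c (K₀ ∪ P ∪ K₁) = col

/-- `D_r^{smp}(m,k)`: the simple-daisy Ramsey number. -/
noncomputable def simpleDaisyRamsey (r m k : ℕ) : ℕ :=
  sInf {N : ℕ | ∀ c : Finset ℕ → Bool, HasMonoSimpleDaisy r m k N c}

theorem ramsey_exists : ∀ s n : ℕ, ∃ N : ℕ, ∀ (A : Finset ℕ) (c : Finset ℕ → Bool),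
    N ≤ A.card → ∃ S ⊆ A, S.card = n ∧ ∃ col : Bool, ∀ P ⊆ S, P.card = s → c P = col := by
  intro s
  induction s with
  | zero =>
    intro n
    refine ⟨n, fun A c hA => ?_⟩
    obtain ⟨S, hS, hcard⟩ := Finset.exists_subset_card_eq hA
    refine ⟨S, hS, hcard, c ∅, fun P _ hP => ?_⟩
    rw [Finset.card_eq_zero.mp hP]
  | succ s ih =>
    have inner : ∀ t : ℕ, ∃ N : ℕ, ∀ (A : Finset ℕ) (c : Finset ℕ → Bool),
        N ≤ A.card → ∃ S ⊆ A, S.card = t ∧ ∃ col : ℕ → Bool,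
          ∀ x ∈ S, ∀ Q ⊆ S, Q.card = s + 1 → x ∈ Q → (∀ y ∈ Q, x ≤ y) → c Q = col x := by
      intro t
      induction t with
      | zero =>
        exact ⟨0, fun A c _ => ⟨∅, Finset.empty_subset A, Finset.card_empty, fun _ => true,
          fun x hx => absurd hx (Finset.notMem_empty x)⟩⟩
      | succ t iht =>
        obtain ⟨Nt, hNt⟩ := iht
        obtain ⟨Ns, hNs⟩ := ih Nt
        refine ⟨Ns + 1, fun A c hA => ?_⟩
        have hne : A.Nonempty := Finset.card_pos.mp (by omega)
        set v := A.min' hne with hv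
        have hvA : v ∈ A := A.min'_mem hne
        have hA' : Ns ≤ (A.erase v).card := by
          rw [Finset.card_erase_of_mem hvA]; omega
        obtain ⟨B, hBA', hBcard, colv, hcolv⟩ := hNs (A.erase v) (fun P => c (insert v P)) hA'
        obtain ⟨S', hS'B, hS'card, col, hcol⟩ := hNt B c (le_of_eq hBcard.symm)
        have hvS' : v ∉ S' := fun h => (Finset.mem_erase.mp (hBA' (hS'B h))).1 rfl
        refine ⟨insert v S', ?_, ?_, fun x => if x = v then colv else col x, ?_⟩
        · intro x hx
          rcases Finset.mem_insert.mp hx with h | h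
          · exact h ▸ hvA
          · exact Finset.mem_of_mem_erase (hBA' (hS'B h))
        · rw [Finset.card_insert_of_notMem hvS', hS'card]
        · intro x hx Q hQS hQcard hxQ hxmin
          by_cases hxv : x = v
          · subst hxv
            have hvQ : v ∈ Q := hxQ
            have hQe : Q.erase v ⊆ S' := by
              intro y hy
              rcases Finset.mem_erase.mp hy with ⟨hyv, hyQ⟩
              rcases Finset.mem_insert.mp (hQS hyQ) with h | h
              · exact absurd h hyv
              · exact h
            have : c Q = colv := by
              have h1 : Q = insert v (Q.erase v) := (Finset.insert_erase hvQ).symm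
              have h2 : (Q.erase v).card = s := by
                rw [Finset.card_erase_of_mem hvQ, hQcard]
                omega
              rw [h1]
              exact hcolv (Q.erase v) (fun y hy => hS'B (hQe hy)) h2
            simp [this]
          · have hxS' : x ∈ S' := (Finset.mem_insert.mp hx).resolve_left hxv
            have hvQ : v ∉ Q := by
              intro hvQ
              have h1 : x ≤ v := hxmin v hvQ
              have h2 : v ≤ x := A.min'_le x (Finset.mem_of_mem_erase (hBA' (hS'B hxS')))
              exact hxv (le_antisymm h1 h2)
            have hQS' : Q ⊆ S' := by
              intro y hy
              rcases Finset.mem_insert.mp (hQS hy) with h | h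
              · exact absurd (h ▸ hy) hvQ
              · exact h
            have := hcol x hxS' Q hQS' hQcard hxQ hxmin
            simp [hxv, this]
    intro n
    obtain ⟨N, hN⟩ := inner (2 * n)
    refine ⟨N, fun A c hA => ?_⟩
    obtain ⟨S, hSA, hScard, col, hcol⟩ := hN A c hA
    have hsum := Finset.card_filter_add_card_filter_not (s := S) (p := fun x => col x = true)
    have : n ≤ (S.filter fun x => col x = true).card ∨
        n ≤ (S.filter fun x => ¬ col x = true).card := by omega
    have key : ∃ b : Bool, n ≤ (S.filter fun x => col x = b).card := by
      rcases this with h | h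
      · exact ⟨true, h⟩
      · refine ⟨false, le_trans h (Finset.card_le_card ?_)⟩
        intro x hx
        rcases Finset.mem_filter.mp hx with ⟨h1, h2⟩
        exact Finset.mem_filter.mpr ⟨h1, by simpa using h2⟩
    obtain ⟨b, hb⟩ := key
    obtain ⟨T, hT, hTcard⟩ := Finset.exists_subset_card_eq hb
    refine ⟨T, fun x hx => hSA (Finset.mem_filter.mp (hT hx)).1, hTcard, b, ?_⟩
    intro P hPT hPcard
    have hPne : P.Nonempty := Finset.card_pos.mp (by omega)
    set x := P.min' hPne
    have hxP : x ∈ P := P.min'_mem hPne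
    have hxT : x ∈ T := hPT hxP
    have hxb : col x = b := (Finset.mem_filter.mp (hT hxT)).2
    have hxS : x ∈ S := (Finset.mem_filter.mp (hT hxT)).1
    have := hcol x hxS P (fun y hy => (Finset.mem_filter.mp (hT (hPT hy))).1) hPcard hxP
      (fun y hy => P.min'_le y hy)
    rw [this, hxb]

theorem daisy_to_ramsey (r k m N : ℕ) (hkr : k < r)
    (hn : 1 ≤ (m + k) / (k + 1) - k)
    (hN : ∀ c : Finset ℕ → Bool, HasMonoDaisy r m k N c) (χ : Finset ℕ → Bool) :
    ∃ S ⊆ Finset.Icc 1 N, S.card = (m + k) / (k + 1) - k ∧ IsMonoOn χ (r - k) S := by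
  set n := (m + k) / (k + 1) - k with hn0
  set q := (m + k) / (k + 1) with hq0
  have hq : q = n + k := by omega
  have hqk : k + 1 ≤ q := by omega
  -- the derived coloring
  set c : Finset ℕ → Bool := fun E =>
    χ (E.filter fun x => k ≤ (E.filter (· < x)).card ∧ k ≤ (E.filter (x < ·)).card) with hc0
  obtain ⟨K, M, hKM, hdis, hK, hM, col, hcol⟩ := hN c
  -- pigeonhole: find a popular fiber
  have hmul : q * (k + 1) ≤ m + k := Nat.div_mul_le_self (m + k) (k + 1)
  have hmul2 : (k + 1) * (q - 1) < m := by
    have h1 : (k + 1) * (q - 1) + (k + 1) * 1 = (k + 1) * q := by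
      rw [← Nat.mul_add]; congr 1; omega
    have h2 : (k + 1) * q = q * (k + 1) := Nat.mul_comm _ _
    omega
  have hmaps : ∀ x ∈ M, (K.filter (· < x)).card ∈ Finset.range (k + 1) := by
    intro x _
    exact Finset.mem_range.mpr (by
      have := Finset.card_le_card (Finset.filter_subset (· < x) K)
      omega)
  obtain ⟨j, hjmem, hjbig⟩ := Finset.exists_lt_card_fiber_of_mul_lt_card_of_maps_to hmaps
    (by rw [Finset.card_range, hM]; exact hmul2)
  have hjk : j ≤ k := by have := Finset.mem_range.mp hjmem; omega
  have hM' : q ≤ (M.filter fun x => (K.filter (· < x)).card = j).card := by omega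
  obtain ⟨M'', hM''sub, hM''card⟩ := Finset.exists_subset_card_eq hM'
  have hM''M : M'' ⊆ M := hM''sub.trans (Finset.filter_subset _ _)
  have hjM : ∀ x ∈ M'', (K.filter (· < x)).card = j :=
    fun x hx => (Finset.mem_filter.mp (hM''sub hx)).2
  have hKx : ∀ κ ∈ K, ∀ x ∈ M'', κ ≠ x := by
    intro κ hκ x hx h
    exact (Finset.disjoint_left.mp hdis hκ) (h ▸ hM''M hx)
  have hsep : ∀ κ ∈ K, ∀ x ∈ M'', ∀ y ∈ M'', κ < x → κ < y := by
    intro κ hκ x hx y hy hκx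
    by_contra hκy
    have hyx : y < x := by
      have := hKx κ hκ y hy; omega
    have hsub : K.filter (· < y) ⊆ K.filter (· < x) := by
      intro z hz
      rcases Finset.mem_filter.mp hz with ⟨h1, h2⟩
      exact Finset.mem_filter.mpr ⟨h1, by omega⟩
    have hss : K.filter (· < y) ⊂ K.filter (· < x) :=
      (Finset.ssubset_iff_of_subset hsub).mpr
        ⟨κ, Finset.mem_filter.mpr ⟨hκ, hκx⟩, fun h => hκy (Finset.mem_filter.mp h).2⟩
    have := Finset.card_lt_card hss
    rw [hjM x hx, hjM y hy] at this
    omega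
  have cK_gt : ∀ x ∈ M'', (K.filter (x < ·)).card = k - j := by
    intro x hx
    have he : K.filter (x < ·) = K \ K.filter (· < x) := by
      ext κ
      simp only [Finset.mem_filter, Finset.mem_sdiff, not_and]
      constructor
      · rintro ⟨h1, h2⟩
        exact ⟨h1, fun _ => by omega⟩
      · rintro ⟨h1, h2⟩
        have h3 := h2 h1
        have hne := hKx κ h1 x hx
        exact ⟨h1, by omega⟩
    rw [he, Finset.card_sdiff_of_subset (Finset.filter_subset _ _), hjM x hx, hK]
  -- sorted list of M''
  set l := M''.sort (· ≤ ·) with hl0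
  have hlen : l.length = q := by rw [hl0, Finset.length_sort, hM''card]
  have hnd : l.Nodup := M''.sort_nodup _
  have hsl : l.Pairwise (· < ·) := M''.sortedLT_sort.pairwise
  have hml : ∀ x, x ∈ l ↔ x ∈ M'' := fun x => Finset.mem_sort _
  set L : Finset ℕ := (l.take (k - j)).toFinset with hL0
  set S : Finset ℕ := ((l.drop (k - j)).take n).toFinset with hS0
  set H : Finset ℕ := ((l.drop (k - j)).drop n).toFinset with hH0
  have hcross1 : ∀ x ∈ l.take (k - j), ∀ y ∈ l.drop (k - j), x < y := by
    have h := hsl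
    rw [← List.take_append_drop (k - j) l] at h
    exact (List.pairwise_append.mp h).2.2
  have hcross2 : ∀ x ∈ (l.drop (k - j)).take n, ∀ y ∈ (l.drop (k - j)).drop n, x < y := by
    have h : (l.drop (k - j)).Pairwise (· < ·) := hsl.sublist (List.drop_sublist _ _)
    rw [← List.take_append_drop n (l.drop (k - j))] at h
    exact (List.pairwise_append.mp h).2.2
  have hLM : L ⊆ M'' := fun x hx =>
    (hml x).mp (List.mem_of_mem_take (List.mem_toFinset.mp hx))
  have hSM : S ⊆ M'' := fun x hx =>
    (hml x).mp (List.mem_of_mem_drop (List.mem_of_mem_take (List.mem_toFinset.mp hx)))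
  have hHM : H ⊆ M'' := fun x hx =>
    (hml x).mp (List.mem_of_mem_drop (List.mem_of_mem_drop (List.mem_toFinset.mp hx)))
  have hLcard : L.card = k - j := by
    rw [hL0, List.toFinset_card_of_nodup (hnd.sublist (List.take_sublist _ _)),
      List.length_take, hlen]
    omega
  have hScard : S.card = n := by
    rw [hS0, List.toFinset_card_of_nodup
      (hnd.sublist ((List.take_sublist _ _).trans (List.drop_sublist _ _))),
      List.length_take, List.length_drop, hlen]
    omega
  have hHcard : H.card = j := by
    rw [hH0, List.toFinset_card_of_nodup
      (hnd.sublist ((List.drop_sublist _ _).trans (List.drop_sublist _ _))),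
      List.length_drop, List.length_drop, hlen]
    omega
  have hLS : ∀ x ∈ L, ∀ y ∈ S, x < y := fun x hx y hy =>
    hcross1 x (List.mem_toFinset.mp hx) y (List.mem_of_mem_take (List.mem_toFinset.mp hy))
  have hLH : ∀ x ∈ L, ∀ y ∈ H, x < y := fun x hx y hy =>
    hcross1 x (List.mem_toFinset.mp hx) y (List.mem_of_mem_drop (List.mem_toFinset.mp hy))
  have hSH : ∀ x ∈ S, ∀ y ∈ H, x < y := fun x hx y hy =>
    hcross2 x (List.mem_toFinset.mp hx) y (List.mem_toFinset.mp hy)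
  refine ⟨S, ?_, hScard, col, ?_⟩
  · exact fun x hx => hKM (Finset.mem_union_right _ (hM''M (hSM hx)))
  -- monochromatic on (r-k)-subsets of S
  intro Q hQS hQcard
  set P : Finset ℕ := L ∪ Q ∪ H with hP0
  have hQM : Q ⊆ M'' := hQS.trans hSM
  have dLQ : Disjoint L Q := Finset.disjoint_left.mpr fun x hxL hxQ =>
    lt_irrefl x (hLS x hxL x (hQS hxQ))
  have dLH : Disjoint L H := Finset.disjoint_left.mpr fun x hxL hxH =>
    lt_irrefl x (hLH x hxL x hxH)
  have dQH : Disjoint Q H := Finset.disjoint_left.mpr fun x hxQ hxH =>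
    lt_irrefl x (hSH x (hQS hxQ) x hxH)
  have hPM'' : P ⊆ M'' := by
    intro x hx
    rcases Finset.mem_union.mp hx with h | h
    · rcases Finset.mem_union.mp h with h | h
      · exact hLM h
      · exact hQM h
    · exact hHM h
  have hPM : P ⊆ M := hPM''.trans hM''M
  have hPcard : P.card = r := by
    rw [hP0, Finset.card_union_of_disjoint (Finset.disjoint_union_left.mpr ⟨dLH, dQH⟩),
      Finset.card_union_of_disjoint dLQ, hLcard, hQcard, hHcard]
    omega
  have hcP := hcol P hPM hPcard
  -- now show the trimmed set of K ∪ P is exactly Q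
  set E : Finset ℕ := K ∪ P with hE0
  have hdisKP : Disjoint K P := Finset.disjoint_left.mpr fun x hxK hxP =>
    Finset.disjoint_left.mp hdis hxK (hPM hxP)
  have hQE : Q ⊆ E := fun x hx =>
    Finset.mem_union_right _ (Finset.mem_union_left _ (Finset.mem_union_right _ hx))
  have hQin : ∀ x ∈ Q, k ≤ (E.filter (· < x)).card ∧ k ≤ (E.filter (x < ·)).card := by
    intro x hx
    have hxM : x ∈ M'' := hQM hx
    constructor
    · have hsub : K.filter (· < x) ∪ L ⊆ E.filter (· < x) := by
        intro y hy
        rcases Finset.mem_union.mp hy with h | h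
        · rcases Finset.mem_filter.mp h with ⟨h1, h2⟩
          exact Finset.mem_filter.mpr ⟨Finset.mem_union_left _ h1, h2⟩
        · refine Finset.mem_filter.mpr ⟨Finset.mem_union_right _
            (Finset.mem_union_left _ (Finset.mem_union_left _ h)), hLS y h x (hQS hx)⟩
      have hd : Disjoint (K.filter (· < x)) L := Finset.disjoint_left.mpr fun y hy hyL =>
        Finset.disjoint_left.mp hdis (Finset.mem_of_mem_filter y hy) (hM''M (hLM hyL))
      have hcard := Finset.card_le_card hsub
      rw [Finset.card_union_of_disjoint hd, hjM x hxM, hLcard] at hcard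
      omega
    · have hsub : K.filter (x < ·) ∪ H ⊆ E.filter (x < ·) := by
        intro y hy
        rcases Finset.mem_union.mp hy with h | h
        · rcases Finset.mem_filter.mp h with ⟨h1, h2⟩
          exact Finset.mem_filter.mpr ⟨Finset.mem_union_left _ h1, h2⟩
        · exact Finset.mem_filter.mpr ⟨Finset.mem_union_right _ (Finset.mem_union_right _ h),
            hSH x (hQS hx) y h⟩
      have hd : Disjoint (K.filter (x < ·)) H := Finset.disjoint_left.mpr fun y hy hyH =>
        Finset.disjoint_left.mp hdis (Finset.mem_of_mem_filter y hy) (hM''M (hHM hyH))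
      have hcard := Finset.card_le_card hsub
      rw [Finset.card_union_of_disjoint hd, cK_gt x hxM, hHcard] at hcard
      omega
  have hPmem : ∀ x ∈ P, x ∈ M'' := fun x hx => hPM'' hx
  have hout : ∀ x ∈ E, x ∉ Q →
      ¬(k ≤ (E.filter (· < x)).card ∧ k ≤ (E.filter (x < ·)).card) := by
    intro x hxE hxQ
    rcases Finset.mem_union.mp hxE with hxK | hxP
    · -- x ∈ K
      have hq1 : 1 ≤ q := by omega
      have hM''ne : M''.Nonempty := Finset.card_pos.mp (by omega)
      obtain ⟨y0, hy0⟩ := hM''ne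
      by_cases hxy : x < y0
      · have hxall : ∀ z ∈ M'', x < z := fun z hz => hsep x hxK y0 hy0 z hz hxy
        have hsub : E.filter (· < x) ⊆ (K.filter (· < y0)).erase x := by
          intro y hy
          rcases Finset.mem_filter.mp hy with ⟨hyE, hyx⟩
          rcases Finset.mem_union.mp hyE with h | h
          · exact Finset.mem_erase.mpr ⟨by omega, Finset.mem_filter.mpr ⟨h, by omega⟩⟩
          · exact absurd (hxall y (hPmem y h)) (by omega)
        have hj1 : x ∈ K.filter (· < y0) := Finset.mem_filter.mpr ⟨hxK, hxy⟩
        have hcard := Finset.card_le_card hsub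
        rw [Finset.card_erase_of_mem hj1, hjM y0 hy0] at hcard
        have hj1' : 1 ≤ j := by
          have := Finset.card_pos.mpr ⟨x, hj1⟩; rw [hjM y0 hy0] at this; omega
        intro hpred
        have h1 := hpred.1
        omega
      · have hylt : ∀ z ∈ M'', z < x := by
          intro z hz
          have hne := hKx x hxK z hz
          have : ¬ x < z := fun h => hxy (hsep x hxK z hz y0 hy0 h)
          omega
        have hxmem : x ∈ K \ K.filter (· < y0) := Finset.mem_sdiff.mpr
          ⟨hxK, fun h => hxy (Finset.mem_filter.mp h).2⟩
        have hsub : E.filter (x < ·) ⊆ (K \ K.filter (· < y0)).erase x := by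
          intro w hw
          rcases Finset.mem_filter.mp hw with ⟨hwE, hxw⟩
          rcases Finset.mem_union.mp hwE with h | h
          · refine Finset.mem_erase.mpr ⟨by omega, Finset.mem_sdiff.mpr ⟨h, fun hh => ?_⟩⟩
            have := (Finset.mem_filter.mp hh).2
            have := hylt y0 hy0
            omega
          · exact absurd (hylt w (hPmem w h)) (by omega)
        have hcard := Finset.card_le_card hsub
        rw [Finset.card_erase_of_mem hxmem,
          Finset.card_sdiff_of_subset (Finset.filter_subset _ _), hjM y0 hy0, hK] at hcard
        have hK1 : 1 ≤ k := by
          have := Finset.card_pos.mpr ⟨x, hxK⟩; omega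
        intro hpred
        have h2 := hpred.2
        omega
    · rcases Finset.mem_union.mp hxP with hxLQ | hxH
      · rcases Finset.mem_union.mp hxLQ with hxL | hxQ'
        · -- x ∈ L
          have hxM : x ∈ M'' := hLM hxL
          have hsub : E.filter (· < x) ⊆ K.filter (· < x) ∪ L.erase x := by
            intro y hy
            rcases Finset.mem_filter.mp hy with ⟨hyE, hyx⟩
            rcases Finset.mem_union.mp hyE with h | h
            · exact Finset.mem_union_left _ (Finset.mem_filter.mpr ⟨h, hyx⟩)
            · rcases Finset.mem_union.mp h with h' | h'
              · rcases Finset.mem_union.mp h' with h'' | h''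
                · exact Finset.mem_union_right _ (Finset.mem_erase.mpr ⟨by omega, h''⟩)
                · exact absurd (hLS x hxL y (hQS h'')) (by omega)
              · exact absurd (hLH x hxL y h') (by omega)
          have hL1 : 1 ≤ k - j := by
            have := Finset.card_pos.mpr ⟨x, hxL⟩; omega
          have hcard := (Finset.card_le_card hsub).trans (Finset.card_union_le _ _)
          rw [hjM x hxM, Finset.card_erase_of_mem hxL, hLcard] at hcard
          intro ⟨h1, _⟩
          omega
        · exact absurd hxQ' hxQ
      · -- x ∈ H
        have hxM : x ∈ M'' := hHM hxH
        have hsub : E.filter (x < ·) ⊆ K.filter (x < ·) ∪ H.erase x := by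
          intro y hy
          rcases Finset.mem_filter.mp hy with ⟨hyE, hxy⟩
          rcases Finset.mem_union.mp hyE with h | h
          · exact Finset.mem_union_left _ (Finset.mem_filter.mpr ⟨h, hxy⟩)
          · rcases Finset.mem_union.mp h with h' | h'
            · rcases Finset.mem_union.mp h' with h'' | h''
              · exact absurd (hLH y h'' x hxH) (by omega)
              · exact absurd (hSH y (hQS h'') x hxH) (by omega)
            · exact Finset.mem_union_right _ (Finset.mem_erase.mpr ⟨by omega, h'⟩)
        have hH1 : 1 ≤ j := by
          have := Finset.card_pos.mpr ⟨x, hxH⟩; omega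
        have hcard := (Finset.card_le_card hsub).trans (Finset.card_union_le _ _)
        rw [cK_gt x hxM, Finset.card_erase_of_mem hxH, hHcard] at hcard
        intro hpred
        have h2 := hpred.2
        omega
  have htrim : (E.filter fun x => k ≤ (E.filter (· < x)).card ∧
      k ≤ (E.filter (x < ·)).card) = Q := by
    ext x
    constructor
    · intro hx
      rcases Finset.mem_filter.mp hx with ⟨hxE, hpred⟩
      by_contra hxQ
      exact hout x hxE hxQ hpred
    · intro hx
      exact Finset.mem_filter.mpr ⟨hQE hx, hQin x hx⟩
  have hcP' : χ (E.filter fun x => k ≤ (E.filter (· < x)).card ∧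
      k ≤ (E.filter (x < ·)).card) = col := hcP
  rw [htrim] at hcP'
  exact hcP'

/-- For all integers `r > k ≥ 0` and `m`:
`D_r(m,k) ≥ R_{r-k}(⌈m/(k+1)⌉ - k)` (here `⌈m/(k+1)⌉ = (m+k)/(k+1)` in `ℕ`). -/
theorem ramsey_le_daisyRamsey (r k m : ℕ) (hkr : k < r) :
    ramseyNumber (r - k) ((m + k) / (k + 1) - k) ≤ daisyRamsey r m k := by
  by_cases hn : (m + k) / (k + 1) - k = 0
  · refine le_trans (Nat.sInf_le ?_) (Nat.zero_le _)
    intro c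
    refine ⟨∅, Finset.empty_subset _, by simp [hn], true, ?_⟩
    intro P hP hPcard
    rw [Finset.subset_empty.mp hP] at hPcard
    simp only [Finset.card_empty] at hPcard
    omega
  · obtain ⟨N₀, hN₀⟩ := ramsey_exists (r + k) (m + k)
    have hBne : {N : ℕ | ∀ c : Finset ℕ → Bool, HasMonoDaisy r m k N c}.Nonempty := by
      refine ⟨N₀, fun c => ?_⟩
      have hcard : N₀ ≤ (Finset.Icc 1 N₀).card := by
        rw [Nat.card_Icc]; omega
      obtain ⟨T, hT, hTcard, col, hTmono⟩ := hN₀ (Finset.Icc 1 N₀) c hcard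
      obtain ⟨K, hKT, hKcard⟩ := Finset.exists_subset_card_eq
        (show k ≤ T.card by omega)
      refine ⟨K, T \ K, ?_, Finset.disjoint_sdiff, hKcard, ?_, col, ?_⟩
      · rw [Finset.union_sdiff_of_subset hKT]; exact hT
      · rw [Finset.card_sdiff_of_subset hKT, hTcard, hKcard]; omega
      · intro P hPM hPcard
        have hPT : P ⊆ T := hPM.trans (Finset.sdiff_subset)
        have hdisj : Disjoint K P := Finset.disjoint_left.mpr fun x hxK hxP =>
          (Finset.mem_sdiff.mp (hPM hxP)).2 hxK
        refine hTmono (K ∪ P) (Finset.union_subset hKT hPT) ?_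
        rw [Finset.card_union_of_disjoint hdisj, hKcard, hPcard]
        omega
    have hmem := Nat.sInf_mem hBne
    exact Nat.sInf_le fun χ => daisy_to_ramsey r k m _ hkr (by omega) hmem χ
end

section
/- For all integers r ≥ 1, k ≥ 0, and m, one has D_r(m,k) ≥ D_r^{smp}(⌈m/(k+1)⌉, k): the daisy Ramsey number is at least the simple-daisy Ramsey number with universe of petals shrunk by a factor k+1. -/
/-!
The `k` kernel vertices of a daisy cut the line into `k + 1` gaps, so some gap holds at least
`⌈m/(k+1)⌉` of its `m` petal vertices. Splitting the kernel at that gap, these petals form a simple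
daisy whose edges are edges of the original one, hence of the same colour. So every `N` that forces
a monochromatic `(r,m,k)`-daisy forces a monochromatic simple `(r,⌈m/(k+1)⌉,k)`-daisy. Because
`sInf ∅ = 0`, this needs such an `N` to exist: that is the hypergraph Ramsey theorem, proved by
induction on the uniformity through pre-homogeneous sequences (Erdős–Rado).
-/

open Finset

namespace Finset

variable {α β : Type*} [DecidableEq β] {s : Finset α} {t : Finset β} {f : α → β}

theorem exists_div_le_card_fiber_of_maps_to (hf : ∀ a ∈ s, f a ∈ t) (ht : t.Nonempty) :
    ∃ y ∈ t, (#s + #t - 1) / #t ≤ #{x ∈ s | f x = y} := by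
  have hqt : (#s + #t - 1) / #t * #t ≤ #s + #t - 1 := Nat.div_mul_le_self _ _
  generalize (#s + #t - 1) / #t = q at hqt ⊢
  obtain hq | hq := Nat.eq_zero_or_pos q
  · obtain ⟨y, hy⟩ := ht
    exact ⟨y, hy, hq ▸ Nat.zero_le _⟩
  have ht_le : #t ≤ q * #t := Nat.le_mul_of_pos_left _ hq
  have hlt : #t * (q - 1) < #s := by
    have := ht.card_pos
    rw [Nat.mul_sub_one, mul_comm #t q]
    omega
  obtain ⟨y, hy, hfiber⟩ := exists_lt_card_fiber_of_mul_lt_card_of_maps_to hf hlt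
  exact ⟨y, hy, by omega⟩

theorem filter_lt_eq_filter_lt_of_card_eq [LinearOrder α] (K : Finset α) {y y' : α}
    (h : #{x ∈ K | x < y} = #{x ∈ K | x < y'}) : {x ∈ K | x < y} = {x ∈ K | x < y'} := by
  wlog hyy' : y ≤ y' generalizing y y'
  · exact (this h.symm (le_of_not_ge hyy')).symm
  refine eq_of_subset_of_card_le (fun x hx => ?_) h.ge
  rw [mem_filter] at hx ⊢
  exact ⟨hx.1, hx.2.trans_le hyy'⟩

end Finset

section Ramsey

def IsPrehomogeneous (c : Finset ℕ → Bool) (r : ℕ) (s : Finset ℕ) (ε : ℕ → Bool) : Prop :=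
  ∀ b ∈ s, ∀ P ⊆ {x ∈ s | b < x}, #P = r → c (insert b P) = ε b

variable {c : Finset ℕ → Bool} {r : ℕ} {s : Finset ℕ} {ε : ℕ → Bool}

theorem IsPrehomogeneous.insert_of_lt {a : ℕ} {col : Bool} (h : IsPrehomogeneous c r s ε)
    (has : ∀ x ∈ s, a < x) (hcol : ∀ P ⊆ s, #P = r → c (insert a P) = col) :
    IsPrehomogeneous c r (insert a s) (Function.update ε a col) := by
  intro b hb P hP hPr
  have mem_s : ∀ x ∈ P, x ≠ a → x ∈ s := fun x hx hxa =>
    (mem_insert.mp (mem_filter.mp (hP hx)).1).resolve_left hxa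
  obtain rfl | hb := mem_insert.mp hb
  · rw [Function.update_self]
    exact hcol P (fun x hx => mem_s x hx (mem_filter.mp (hP hx)).2.ne') hPr
  · rw [Function.update_of_ne (has b hb).ne']
    refine h b hb P (fun x hx => mem_filter.mpr ⟨mem_s x hx ?_, (mem_filter.mp (hP hx)).2⟩) hPr
    exact ((has b hb).trans (mem_filter.mp (hP hx)).2).ne'

theorem IsPrehomogeneous.isMonoOn {S : Finset ℕ} {col : Bool} (h : IsPrehomogeneous c r s ε)
    (hS : S ⊆ s) (hε : ∀ b ∈ S, ε b = col) : IsMonoOn c (r + 1) S := by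
  refine ⟨col, fun P hP hPr => ?_⟩
  have hne : P.Nonempty := card_pos.mp (by omega)
  have hmin := P.min'_mem hne
  have hrest : P.erase (P.min' hne) ⊆ {x ∈ s | P.min' hne < x} := fun x hx =>
    mem_filter.mpr ⟨hS (hP (mem_of_mem_erase hx)), P.min'_lt_of_mem_erase_min' hne hx⟩
  rw [← insert_erase hmin, h _ (hS (hP hmin)) _ hrest (by rw [card_erase_of_mem hmin]; omega),
    hε _ (hP hmin)]

theorem exists_isPrehomogeneous
    (hR : ∀ n, ∃ N, ∀ (X : Finset ℕ) (c : Finset ℕ → Bool), N ≤ #X →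
      ∃ S ⊆ X, #S = n ∧ IsMonoOn c r S)
    (t : ℕ) : ∃ N, ∀ (X : Finset ℕ) (c : Finset ℕ → Bool), N ≤ #X →
      ∃ s ⊆ X, #s = t ∧ ∃ ε, IsPrehomogeneous c r s ε := by
  induction t with
  | zero =>
    exact ⟨0, fun X c _ => ⟨∅, empty_subset X, rfl, fun _ => false, by simp [IsPrehomogeneous]⟩⟩
  | succ t ih =>
    obtain ⟨Nt, hNt⟩ := ih
    obtain ⟨N, hN⟩ := hR Nt
    refine ⟨N + 1, fun X c hX => ?_⟩
    have hXne : X.Nonempty := card_pos.mp (by omega)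
    set a := X.min' hXne
    have ha : a ∈ X := X.min'_mem hXne
    obtain ⟨Y, hYX, hY, col, hcol⟩ :=
      hN (X.erase a) (fun P => c (insert a P)) (by rw [card_erase_of_mem ha]; omega)
    obtain ⟨s, hsY, hs, ε, hε⟩ := hNt Y c hY.ge
    have has : ∀ x ∈ s, a < x := fun x hx => X.min'_lt_of_mem_erase_min' hXne (hYX (hsY hx))
    refine ⟨insert a s, insert_subset ha ((hsY.trans hYX).trans (erase_subset a X)), ?_, _,
      hε.insert_of_lt has fun P hP => hcol P (hP.trans hsY)⟩
    rw [card_insert_of_notMem fun h => (has a h).false, hs]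

theorem exists_isMonoOn_of_le_card (r n : ℕ) :
    ∃ N, ∀ (X : Finset ℕ) (c : Finset ℕ → Bool), N ≤ #X →
      ∃ S ⊆ X, #S = n ∧ IsMonoOn c r S := by
  induction r generalizing n with
  | zero =>
    refine ⟨n, fun X c hX => ?_⟩
    obtain ⟨S, hSX, hS⟩ := exists_subset_card_eq hX
    exact ⟨S, hSX, hS, c ∅, fun P _ hP => by rw [card_eq_zero.mp hP]⟩
  | succ r ih =>
    obtain ⟨N, hN⟩ := exists_isPrehomogeneous ih (2 * n)
    refine ⟨N, fun X c hX => ?_⟩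
    obtain ⟨s, hsX, hs, ε, hε⟩ := hN X c hX
    obtain ⟨col, -, hcol⟩ := exists_le_card_fiber_of_mul_le_card_of_maps_to
      (fun b _ => mem_univ (ε b)) univ_nonempty (by simp [hs] : #(univ : Finset Bool) * n ≤ #s)
    obtain ⟨S, hSs, hS⟩ := exists_subset_card_eq hcol
    exact ⟨S, (hSs.trans (filter_subset _ s)).trans hsX, hS,
      hε.isMonoOn (hSs.trans (filter_subset _ s)) fun b hb => (mem_filter.mp (hSs hb)).2⟩

end Ramsey

theorem exists_forall_hasMonoDaisy (r m k : ℕ) : ∃ N, ∀ c, HasMonoDaisy r m k N c := by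
  obtain ⟨N, hN⟩ := exists_isMonoOn_of_le_card (k + r) (k + m)
  refine ⟨N, fun c => ?_⟩
  obtain ⟨S, hS, hScard, col, hcol⟩ := hN (Icc 1 N) c (by simp)
  obtain ⟨K, hKS, hK⟩ := exists_subset_card_eq (show k ≤ #S by omega)
  refine ⟨K, S \ K, by rwa [union_sdiff_of_subset hKS], disjoint_sdiff, hK,
    by rw [card_sdiff_of_subset hKS]; omega, col, fun P hP hPr => hcol _ ?_ ?_⟩
  · exact union_subset hKS (hP.trans sdiff_subset)
  · rw [card_union_of_disjoint (disjoint_of_subset_right hP disjoint_sdiff), hK, hPr]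

theorem hasMonoSimpleDaisy_of_filter_lt_eq {r k N : ℕ} {c : Finset ℕ → Bool} {col : Bool}
    {K M M' : Finset ℕ} (hsub : K ∪ M ⊆ Icc 1 N) (hdisj : Disjoint K M) (hK : #K = k)
    (hcol : ∀ P ⊆ M, #P = r → c (K ∪ P) = col) (hM' : M' ⊆ M) (b : ℕ)
    (hb : ∀ y ∈ M', {x ∈ K | x < y} = {x ∈ K | x < b}) :
    HasMonoSimpleDaisy r #M' k N c := by
  set K₀ := {x ∈ K | x < b}
  have hunion : K₀ ∪ (K \ K₀) = K := union_sdiff_of_subset (filter_subset _ K)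
  refine ⟨K₀, M', K \ K₀, ?_, fun x hx y hy => ?_, fun y hy z hz => ?_, fun x hx z hz => ?_,
    by rw [hunion, hK], rfl, col, fun P hP hPr => ?_⟩
  · rw [union_right_comm, hunion]
    exact (union_subset_union_right hM').trans hsub
  · rw [← hb y hy, mem_filter] at hx
    exact hx.2
  · rw [← hb y hy, mem_sdiff, mem_filter] at hz
    have hyz : y ≤ z := not_lt.mp fun hzy => hz.2 ⟨hz.1, hzy⟩
    exact hyz.lt_of_ne fun h => disjoint_left.mp hdisj (h ▸ hz.1) (hM' hy)
  · rw [mem_sdiff, mem_filter] at hz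
    exact (mem_filter.mp hx).2.trans_le (not_lt.mp fun hzb => hz.2 ⟨hz.1, hzb⟩)
  · rw [union_right_comm, hunion]
    exact hcol P (hP.trans hM') hPr

theorem HasMonoDaisy.hasMonoSimpleDaisy {r m k N : ℕ} {c : Finset ℕ → Bool}
    (h : HasMonoDaisy r m k N c) : HasMonoSimpleDaisy r ((m + k) / (k + 1)) k N c := by
  obtain ⟨K, M, hsub, hdisj, hK, hM, col, hcol⟩ := h
  -- `#{x ∈ K | x < y} ≤ k` indexes the gap of `K` that contains the petal vertex `y`
  obtain ⟨j, -, hj⟩ := exists_div_le_card_fiber_of_maps_to (s := M) (t := range (k + 1))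
    (f := fun y => #{x ∈ K | x < y})
    (fun y _ => mem_range.mpr (Nat.lt_succ_of_le (hK ▸ card_filter_le _ _)))
    ⟨0, mem_range.mpr k.succ_pos⟩
  rw [card_range, hM, ← add_assoc, Nat.add_sub_cancel] at hj
  obtain ⟨M', hM'F, hM'⟩ := exists_subset_card_eq hj
  obtain ⟨b, hb⟩ : ∃ b, ∀ y ∈ M', {x ∈ K | x < y} = {x ∈ K | x < b} := by
    obtain rfl | ⟨b, hbM'⟩ := M'.eq_empty_or_nonempty
    · exact ⟨0, by simp⟩
    · exact ⟨b, fun y hy => filter_lt_eq_filter_lt_of_card_eq K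
        ((mem_filter.mp (hM'F hy)).2.trans (mem_filter.mp (hM'F hbM')).2.symm)⟩
  exact hM' ▸ hasMonoSimpleDaisy_of_filter_lt_eq hsub hdisj hK hcol
    (hM'F.trans (filter_subset _ M)) b hb

theorem simpleDaisyRamsey_le_daisyRamsey_general (r k m : ℕ) :
    simpleDaisyRamsey r ((m + k) / (k + 1)) k ≤ daisyRamsey r m k := by
  obtain ⟨N, hN⟩ := exists_forall_hasMonoDaisy r m k
  have hmem : daisyRamsey r m k ∈ {N | ∀ c, HasMonoDaisy r m k N c} := Nat.sInf_mem ⟨N, hN⟩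
  exact Nat.sInf_le fun c => (hmem c).hasMonoSimpleDaisy

/-- For all integers `r ≥ 1`, `k ≥ 0`, `m`:
`D_r(m,k) ≥ D_r^{smp}(⌈m/(k+1)⌉, k)` (here `⌈m/(k+1)⌉ = (m+k)/(k+1)` in `ℕ`). -/
theorem simpleDaisyRamsey_le_daisyRamsey (r k m : ℕ) (hr : 1 ≤ r) :
    simpleDaisyRamsey r ((m + k) / (k + 1)) k ≤ daisyRamsey r m k :=
  simpleDaisyRamsey_le_daisyRamsey_general r k m
end

section
/- For the complete binary tree of height N with leaves {1,...,2^N}: let X ⊆ {1,...,2^N} and suppose I ⊆ X is an interval I = A ∪ B with A < B, where A = {x_1 < ... < x_ℓ} is a closed interval in X and B = {b_1 < ... < b_s}. Then the condition δ(x_ℓ, b_1) > δ(b_1, b_2) > ... > δ(b_{s-1}, b_s) holds if and only if the intervals A ∪ {b_1, ..., b_i} are closed in X for every 1 ≤ i ≤ s, provided I itself is closed in X. -/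
open Finset

/-- Level of the greatest common ancestor of leaves `x y ∈ {1,…,2^N}` of the
complete binary tree of height `N` (root at level `1`, leaves at level `N+1`).
Equivalently, one plus the length of the longest common prefix of the `N`-bit
binary representations of `x-1` and `y-1`. -/
def treeDelta (N x y : ℕ) : ℕ := N + 1 - Nat.size ((x - 1) ^^^ (y - 1))

/-- Leaf `z ∈ {1,…,2^N}` is a descendant of the tree vertex `v = (prefix length, prefix)`. -/
def IsDesc (N : ℕ) (v : ℕ × ℕ) (z : ℕ) : Prop := (z - 1) >>> (N - v.1) = v.2

/-- `I` is a closed interval in `X`: it is nonempty and consists exactly of the elements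
of `X` that are descendants of the greatest common ancestor of `min I` and `max I`
(this implies that `I` consists of consecutive elements of `X`). -/
def IsClosedInterval (N : ℕ) (X I : Finset ℕ) : Prop :=
  I.Nonempty ∧ I ⊆ X ∧
    ∀ x ∈ X, (x ∈ I ↔ IsDesc N (treeAnc N (WithTop.untopD 0 I.min) (WithBot.unbotD 0 I.max)) x)

/-- The list `δ(x_1,x_2), δ(x_2,x_3), …` of GCA-levels of consecutive elements of `C`. -/
def deltaList (N : ℕ) (C : Finset ℕ) : List ℕ :=
  List.zipWith (treeDelta N) (C.sort (· ≤ ·)) (C.sort (· ≤ ·)).tail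

/-- `I = A ∪ B` is a left-comb partition in `X`: `B ≠ ∅`, `A < B`, `A` is closed in `X`,
and `δ(max A, b_1) > δ(b_1,b_2) > ⋯ > δ(b_{s-1}, b_s)` along `B = {b_1 < ⋯ < b_s}`. -/
def IsLeftCombSplit (N : ℕ) (X A B : Finset ℕ) : Prop :=
  B.Nonempty ∧ (∀ a ∈ A, ∀ b ∈ B, a < b) ∧ IsClosedInterval N X A ∧
    List.Chain' (· > ·) (deltaList N (insert (WithBot.unbotD 0 A.max) B))

/-- `I = A ∪ B` is a right-comb partition in `X`: `B ≠ ∅`, `B < A`, `A` is closed in `X`,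
and `δ(b_1,b_2) < ⋯ < δ(b_{s-1},b_s) < δ(b_s, min A)` along `B = {b_1 < ⋯ < b_s}`. -/
def IsRightCombSplit (N : ℕ) (X A B : Finset ℕ) : Prop :=
  B.Nonempty ∧ (∀ b ∈ B, ∀ a ∈ A, b < a) ∧ IsClosedInterval N X A ∧
    List.Chain' (· < ·) (deltaList N (insert (WithTop.untopD 0 A.min) B))

/-- `I` is an `ℓ`-left comb in `X` with canonical partition `I = A ∪ B`, `|A| = ℓ` least. -/
def IsLeftComb (N : ℕ) (X I A B : Finset ℕ) : Prop :=
  IsClosedInterval N X I ∧ I = A ∪ B ∧ IsLeftCombSplit N X A B ∧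
    ∀ A' B' : Finset ℕ, I = A' ∪ B' → IsLeftCombSplit N X A' B' → A.card ≤ A'.card

/-- `I` is an `ℓ`-right comb in `X` with canonical partition `I = A ∪ B`, `|A| = ℓ` least. -/
def IsRightComb (N : ℕ) (X I A B : Finset ℕ) : Prop :=
  IsClosedInterval N X I ∧ I = A ∪ B ∧ IsRightCombSplit N X A B ∧
    ∀ A' B' : Finset ℕ, I = A' ∪ B' → IsRightCombSplit N X A' B' → A.card ≤ A'.card

/-- `I` is a broken comb in `X`: a closed interval that is neither a left nor a right comb. -/
def IsBrokenComb (N : ℕ) (X I : Finset ℕ) : Prop :=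
  IsClosedInterval N X I ∧
    (¬ ∃ A B : Finset ℕ, I = A ∪ B ∧ IsLeftCombSplit N X A B) ∧
    (¬ ∃ A B : Finset ℕ, I = A ∪ B ∧ IsRightCombSplit N X A B)

/-- Adjoining the successor in `X` of `max I` to `I` does not give a closed interval
(vacuously true if `max I` is the last element of `X`). -/
def NoRightExtension (N : ℕ) (X I : Finset ℕ) : Prop :=
  ∀ y ∈ X, y ∉ I → (∀ z ∈ I, z < y) →
    (∀ w ∈ X, w ∉ I → (∀ z ∈ I, z < w) → y ≤ w) →
      ¬ IsClosedInterval N X (insert y I)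

/-- Adjoining the predecessor in `X` of `min I` to `I` does not give a closed interval. -/
def NoLeftExtension (N : ℕ) (X I : Finset ℕ) : Prop :=
  ∀ y ∈ X, y ∉ I → (∀ z ∈ I, y < z) →
    (∀ w ∈ X, w ∉ I → (∀ z ∈ I, w < z) → w ≤ y) →
      ¬ IsClosedInterval N X (insert y I)

/-- `I` is a maximal comb in `X`, with canonical partition `I = A ∪ B` (for broken
combs we use the convention `A = I`, `B = ∅`). -/
def IsMaximalComb (N : ℕ) (X I A B : Finset ℕ) : Prop :=
  (IsLeftComb N X I A B ∧ NoRightExtension N X I) ∨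
  (IsRightComb N X I A B ∧ NoLeftExtension N X I) ∨
  (A = I ∧ B = ∅ ∧ IsBrokenComb N X I ∧ NoRightExtension N X I ∧ NoLeftExtension N X I)

lemma shiftRight_xor (u v k : ℕ) : (u ^^^ v) >>> k = (u >>> k) ^^^ (v >>> k) := by
  apply Nat.eq_of_testBit_eq
  intro i
  simp [Nat.testBit_shiftRight, Nat.testBit_xor]

lemma shiftRight_eq_iff_size_le {u v k : ℕ} :
    u >>> k = v >>> k ↔ Nat.size (u ^^^ v) ≤ k := by
  rw [Nat.size_le]
  constructor
  · intro h
    have h2 : (u ^^^ v) >>> k = 0 := by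
      rw [shiftRight_xor, h, Nat.xor_self]
    rw [Nat.shiftRight_eq_div_pow] at h2
    exact (Nat.div_eq_zero_iff.mp h2).resolve_left (by positivity)
  · intro h
    have h2 : (u ^^^ v) >>> k = 0 := by
      rw [Nat.shiftRight_eq_div_pow]
      exact Nat.div_eq_of_lt h
    rw [shiftRight_xor] at h2
    have h3 := congrArg (· ^^^ (v >>> k)) h2
    simp only [Nat.xor_assoc, Nat.xor_self, Nat.xor_zero, Nat.zero_xor] at h3
    exact h3

lemma shiftRight_le_shiftRight {u v : ℕ} (h : u ≤ v) (k : ℕ) : u >>> k ≤ v >>> k := by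
  simp only [Nat.shiftRight_eq_div_pow]
  exact Nat.div_le_div_right h

lemma size_xor_max {u v w : ℕ} (h1 : u ≤ v) (h2 : v ≤ w) :
    Nat.size (u ^^^ w) = max (Nat.size (u ^^^ v)) (Nat.size (v ^^^ w)) := by
  apply le_antisymm
  · rw [Nat.size_le]
    have huv : u ^^^ v < 2 ^ max (Nat.size (u ^^^ v)) (Nat.size (v ^^^ w)) :=
      lt_of_lt_of_le (Nat.lt_size_self _) (Nat.pow_le_pow_right (by norm_num) (le_max_left _ _))
    have hvw : v ^^^ w < 2 ^ max (Nat.size (u ^^^ v)) (Nat.size (v ^^^ w)) :=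
      lt_of_lt_of_le (Nat.lt_size_self _) (Nat.pow_le_pow_right (by norm_num) (le_max_right _ _))
    calc u ^^^ w = (u ^^^ v) ^^^ (v ^^^ w) := by
          rw [Nat.xor_assoc, ← Nat.xor_assoc v v w, Nat.xor_self, Nat.zero_xor]
      _ < _ := Nat.xor_lt_two_pow huv hvw
  · set k := Nat.size (u ^^^ w) with hk
    have huw : u >>> k = w >>> k := shiftRight_eq_iff_size_le.mpr le_rfl
    have h3 : u >>> k ≤ v >>> k := shiftRight_le_shiftRight h1 k
    have h4 : v >>> k ≤ w >>> k := shiftRight_le_shiftRight h2 k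
    have huv : u >>> k = v >>> k := le_antisymm h3 (huw ▸ h4)
    have hvw : v >>> k = w >>> k := huv ▸ huw
    exact max_le (shiftRight_eq_iff_size_le.mp huv) (shiftRight_eq_iff_size_le.mp hvw)

lemma size_xor_left_le {u v w : ℕ} (h1 : u ≤ v) (h2 : v ≤ w) :
    Nat.size (u ^^^ v) ≤ Nat.size (u ^^^ w) := by
  rw [size_xor_max h1 h2]; exact le_max_left _ _

lemma sandwich {u v w k : ℕ} (h1 : u ≤ v) (h2 : v ≤ w) (h : u >>> k = w >>> k) :
    v >>> k = u >>> k :=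
  le_antisymm (h ▸ shiftRight_le_shiftRight h2 k) (shiftRight_le_shiftRight h1 k)

-- Finset layer --

lemma min_untop' {J : Finset ℕ} (h : J.Nonempty) : WithTop.untopD 0 J.min = J.min' h := by
  rw [← Finset.coe_min' h, WithTop.untopD_coe]

lemma max_unbot' {J : Finset ℕ} (h : J.Nonempty) : WithBot.unbotD 0 J.max = J.max' h := by
  rw [← Finset.coe_max' h, WithBot.unbotD_coe]

lemma isDesc_treeAnc_iff {N x y z : ℕ} (hx : x - 1 < 2 ^ N) (hy : y - 1 < 2 ^ N) :
    IsDesc N (treeAnc N x y) z ↔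
      (z - 1) >>> Nat.size ((x - 1) ^^^ (y - 1)) = (x - 1) >>> Nat.size ((x - 1) ^^^ (y - 1)) := by
  have hs : Nat.size ((x - 1) ^^^ (y - 1)) ≤ N := Nat.size_le.mpr (Nat.xor_lt_two_pow hx hy)
  unfold IsDesc treeAnc
  rw [Nat.sub_sub_self hs]

lemma size_lt_of_closed_not_mem {N : ℕ} {X J : Finset ℕ} (hX : X ⊆ Finset.Icc 1 (2 ^ N))
    (hJ : IsClosedInterval N X J) (hne : J.Nonempty) {x : ℕ} (hx : x ∈ X) (hxJ : x ∉ J) :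
    Nat.size ((J.min' hne - 1) ^^^ (J.max' hne - 1)) <
      Nat.size ((J.min' hne - 1) ^^^ (x - 1)) := by
  have hbd : ∀ y ∈ X, y - 1 < 2 ^ N := by
    intro y hy
    have := Finset.mem_Icc.mp (hX hy)
    omega
  have hmem : ∀ y ∈ J, y ∈ X := fun y hy => hJ.2.1 hy
  have h1 : ¬ IsDesc N (treeAnc N (WithTop.untopD 0 J.min) (WithBot.unbotD 0 J.max)) x :=
    fun h => hxJ ((hJ.2.2 x hx).mpr h)
  rw [min_untop' hne, max_unbot' hne,
    isDesc_treeAnc_iff (hbd _ (hmem _ (Finset.min'_mem J hne)))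
      (hbd _ (hmem _ (Finset.max'_mem J hne)))] at h1
  by_contra hle
  push_neg at hle
  exact h1 (shiftRight_eq_iff_size_le.mpr (by rwa [Nat.xor_comm]))

lemma isClosedInterval_of {N : ℕ} {X J : Finset ℕ} (hX : X ⊆ Finset.Icc 1 (2 ^ N))
    (hne : J.Nonempty) (hJX : J ⊆ X)
    (h : ∀ x ∈ X,
      (x - 1) >>> Nat.size ((J.min' hne - 1) ^^^ (J.max' hne - 1)) =
        (J.min' hne - 1) >>> Nat.size ((J.min' hne - 1) ^^^ (J.max' hne - 1)) → x ∈ J) :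
    IsClosedInterval N X J := by
  have hbd : ∀ y ∈ X, y - 1 < 2 ^ N := by
    intro y hy
    have := Finset.mem_Icc.mp (hX hy)
    omega
  refine ⟨hne, hJX, fun x hx => ?_⟩
  rw [min_untop' hne, max_unbot' hne,
    isDesc_treeAnc_iff (hbd _ (hJX (Finset.min'_mem J hne))) (hbd _ (hJX (Finset.max'_mem J hne)))]
  constructor
  · intro hxJ
    exact sandwich (by have := Finset.min'_le J x hxJ; omega)
      (by have := Finset.le_max' J x hxJ; omega)
      (shiftRight_eq_iff_size_le.mpr le_rfl)
  · exact h x hx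

lemma union_min' {A C : Finset ℕ} (hA : A.Nonempty) (hC : C.Nonempty)
    (h : ∀ a ∈ A, ∀ c ∈ C, a < c) :
    (A ∪ C).min' (hA.mono Finset.subset_union_left) = A.min' hA := by
  apply le_antisymm
  · exact Finset.min'_le _ _ (Finset.mem_union_left _ (Finset.min'_mem A hA))
  · apply Finset.le_min'
    intro y hy
    rcases Finset.mem_union.mp hy with hy | hy
    · exact Finset.min'_le _ _ hy
    · exact le_of_lt (h _ (Finset.min'_mem A hA) _ hy)

lemma union_max' {A C : Finset ℕ} (hA : A.Nonempty) (hC : C.Nonempty)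
    (h : ∀ a ∈ A, ∀ c ∈ C, a < c) :
    (A ∪ C).max' (hA.mono Finset.subset_union_left) = C.max' hC := by
  apply le_antisymm
  · apply Finset.max'_le
    intro y hy
    rcases Finset.mem_union.mp hy with hy | hy
    · exact le_of_lt (h _ hy _ (Finset.max'_mem C hC))
    · exact Finset.le_max' _ _ hy
  · exact Finset.le_max' _ _ (Finset.mem_union_right _ (Finset.max'_mem C hC))

/-- Claim A: closedness of `A ∪ C` for a downward-closed `C ⊆ B` is equivalent to
`f (max C) < f b'` for all later `b' ∈ B`, where `f x = size((min A - 1) ^^^ (x-1))`. -/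
lemma claimA {N : ℕ} {X A B : Finset ℕ} (hX : X ⊆ Finset.Icc 1 (2 ^ N))
    (hA : IsClosedInterval N X A) (hB : B.Nonempty)
    (hAB : ∀ a ∈ A, ∀ b ∈ B, a < b)
    (hI : IsClosedInterval N X (A ∪ B))
    {C : Finset ℕ} (hCB : C ⊆ B) (hC : C.Nonempty)
    (hdown : ∀ b ∈ B, (∃ c ∈ C, b ≤ c) → b ∈ C) :
    IsClosedInterval N X (A ∪ C) ↔
      ∀ b' ∈ B, C.max' hC < b' →
        Nat.size ((A.min' hA.1 - 1) ^^^ (C.max' hC - 1)) <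
          Nat.size ((A.min' hA.1 - 1) ^^^ (b' - 1)) := by
  have hAne := hA.1
  set m := A.min' hAne with hm
  set b := C.max' hC with hbdef
  have hbB : b ∈ B := hCB (Finset.max'_mem C hC)
  have hBX : ∀ y ∈ B, y ∈ X := fun y hy => hI.2.1 (Finset.mem_union_right _ hy)
  have hAX : ∀ y ∈ A, y ∈ X := fun y hy => hA.2.1 hy
  have hbd : ∀ y ∈ X, y - 1 < 2 ^ N := by
    intro y hy
    have := Finset.mem_Icc.mp (hX hy)
    omega
  have hACne : (A ∪ C).Nonempty := hAne.mono Finset.subset_union_left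
  have hAC : ∀ a ∈ A, ∀ c ∈ C, a < c := fun a ha c hc => hAB a ha c (hCB hc)
  have hmin : (A ∪ C).min' hACne = m := union_min' hAne hC hAC
  have hmax : (A ∪ C).max' hACne = b := union_max' hAne hC hAC
  have hmA : m ∈ A := Finset.min'_mem A hAne
  constructor
  · -- closed → sizes increase past b
    intro hcl b' hb' hbb'
    have hb'AC : b' ∉ A ∪ C := by
      intro hmem
      rcases Finset.mem_union.mp hmem with h | h
      · exact absurd (hAB b' h b' hb') (lt_irrefl _)
      · exact absurd (Finset.le_max' C b' h) (not_le.mpr hbb')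
    have := size_lt_of_closed_not_mem hX hcl hACne (hBX b' hb') hb'AC
    rwa [hmin, hmax] at this
  · -- sizes increase past b → closed
    intro hsz
    apply isClosedInterval_of hX hACne
      (Finset.union_subset hA.2.1 (fun c hc => hBX c (hCB hc)))
    rw [hmin, hmax]
    intro x hx hdesc
    -- x is a descendant of anc(m, b); show x ∈ A ∪ C
    have hIne : (A ∪ B).Nonempty := hAne.mono Finset.subset_union_left
    have hminI : (A ∪ B).min' hIne = m := union_min' hAne hB hAB
    have hmaxI : (A ∪ B).max' hIne = B.max' hB := union_max' hAne hB hAB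
    have hmb : m ≤ b := le_of_lt (hAB m hmA b hbB)
    have hbbs : b ≤ B.max' hB := Finset.le_max' B b hbB
    have hfle : Nat.size ((m - 1) ^^^ (b - 1)) ≤ Nat.size ((m - 1) ^^^ (B.max' hB - 1)) :=
      size_xor_left_le (by omega) (by omega)
    -- x is a descendant of anc(A ∪ B)
    have hdesc2 : (x - 1) >>> Nat.size ((m - 1) ^^^ (B.max' hB - 1)) =
        (m - 1) >>> Nat.size ((m - 1) ^^^ (B.max' hB - 1)) := by
      exact shiftRight_eq_iff_size_le.mpr (le_trans (shiftRight_eq_iff_size_le.mp hdesc) hfle)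
    have hminX : m ∈ X := hAX m hmA
    have hmaxX : B.max' hB ∈ X := hBX _ (Finset.max'_mem B hB)
    have hxAB : x ∈ A ∪ B := by
      rw [hI.2.2 x hx, min_untop' hIne, max_unbot' hIne,
        isDesc_treeAnc_iff (by rw [hminI]; exact hbd _ hminX) (by rw [hmaxI]; exact hbd _ hmaxX),
        hminI, hmaxI]
      exact hdesc2
    rcases Finset.mem_union.mp hxAB with h | h
    · exact Finset.mem_union_left _ h
    · -- x ∈ B; show x ≤ b hence x ∈ C
      refine Finset.mem_union_right _ (hdown x h ⟨b, Finset.max'_mem C hC, ?_⟩)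
      by_contra hxb
      push_neg at hxb
      have h2 := hsz x h hxb
      have h3 : Nat.size ((m - 1) ^^^ (x - 1)) ≤ Nat.size ((m - 1) ^^^ (b - 1)) := by
        have := shiftRight_eq_iff_size_le.mp hdesc
        rwa [Nat.xor_comm (x-1)] at this
      omega

lemma chainAux (F : ℕ → ℕ) (G : ℕ → ℕ → ℕ) (L : List ℕ) :
    ∀ (p : ℕ), List.Chain' (fun x y => F y = max (F x) (G x y)) (p :: L) →
      (∀ h ∈ L.head?, F p < F h) →
      (List.Chain' (· < ·) (List.zipWith G (p :: L) L) ↔ List.Chain' (· < ·) (L.map F)) := by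
  induction L with
  | nil => intro p _ _; simp
  | cons q M ih =>
    intro p hchain hhead
    have h1 := List.isChain_cons_cons.mp hchain
    have hpq : F p < F q := hhead q rfl
    have hGpq : G p q = F q := by rcases max_choice (F p) (G p q) with h | h <;> rw [h1.1] <;> omega
    cases M with
    | nil => simp [List.Chain']
    | cons r M' =>
      have h2 := List.isChain_cons_cons.mp h1.2
      have hFr : F r = max (F q) (G q r) := h2.1
      simp only [List.Chain', List.zipWith_cons_cons, List.map_cons, List.isChain_cons_cons]
      have ihq := ih q h1.2
      constructor
      · rintro ⟨hlt, hrest⟩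
        have hqr : F q < F r := by rcases max_choice (F q) (G q r) with h | h <;> rw [hFr] <;> omega
        have hbase : ∀ h ∈ (r :: M').head?, F q < F h := by
          intro h hh
          simp only [List.head?_cons, Option.mem_def, Option.some.injEq] at hh
          subst hh; exact hqr
        refine ⟨hqr, (ihq hbase).mp ?_⟩
        rw [List.zipWith_cons_cons]
        exact hrest
      · rintro ⟨hqr, hrest⟩
        have hbase : ∀ h ∈ (r :: M').head?, F q < F h := by
          intro h hh
          simp only [List.head?_cons, Option.mem_def, Option.some.injEq] at hh
          subst hh; exact hqr
        have hlt : G p q < G q r := by rcases max_choice (F q) (G q r) with h | h <;> rw [hFr] at hqr <;> omega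
        refine ⟨hlt, ?_⟩
        have := (ihq hbase).mpr hrest
        rwa [List.zipWith_cons_cons] at this

lemma chain'_congr_mem {α : Type*} {R S : α → α → Prop} {l : List α}
    (h : ∀ x ∈ l, ∀ y ∈ l, (R x y ↔ S x y)) : List.Chain' R l ↔ List.Chain' S l := by
  induction l with
  | nil => simp [List.Chain']
  | cons a t ih =>
    cases t with
    | nil => simp [List.Chain']
    | cons b t' =>
      unfold List.Chain' at ih ⊢
      rw [List.isChain_cons_cons, List.isChain_cons_cons,
        h a (by simp) b (by simp),
        ih (fun x hx y hy => h x (List.mem_cons_of_mem a hx) y (List.mem_cons_of_mem a hy))]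

lemma mem_of_mem_zipWith {α β γ : Type*} {f : α → β → γ} :
    ∀ {l1 : List α} {l2 : List β} {x : γ}, x ∈ List.zipWith f l1 l2 →
      ∃ a ∈ l1, ∃ b ∈ l2, x = f a b := by
  intro l1
  induction l1 with
  | nil => intro l2 x h; simp at h
  | cons a t ih =>
    intro l2 x h
    cases l2 with
    | nil => simp at h
    | cons b t2 =>
      rw [List.zipWith_cons_cons, List.mem_cons] at h
      rcases h with h | h
      · exact ⟨a, by simp, b, by simp, h⟩
      · obtain ⟨a', ha', b', hb', hx⟩ := ih h
        exact ⟨a', List.mem_cons_of_mem a ha', b', List.mem_cons_of_mem b hb', hx⟩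

lemma claimB {N : ℕ} {X A B : Finset ℕ} (hX : X ⊆ Finset.Icc 1 (2 ^ N))
    (hA : IsClosedInterval N X A) (hB : B.Nonempty)
    (hAB : ∀ a ∈ A, ∀ b ∈ B, a < b)
    (hI : IsClosedInterval N X (A ∪ B)) :
    List.Chain' (· > ·) (deltaList N (insert (WithBot.unbotD 0 A.max) B)) ↔
      ∀ b ∈ B, ∀ b' ∈ B, b < b' →
        Nat.size ((A.min' hA.1 - 1) ^^^ (b - 1)) <
          Nat.size ((A.min' hA.1 - 1) ^^^ (b' - 1)) := by
  have hAne := hA.1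
  set m := A.min' hAne with hm
  set a := A.max' hAne with hadef
  set F : ℕ → ℕ := fun x => Nat.size ((m - 1) ^^^ (x - 1)) with hF
  set G : ℕ → ℕ → ℕ := fun x y => Nat.size ((x - 1) ^^^ (y - 1)) with hG
  set L := B.sort (· ≤ ·) with hL
  have hmA : m ∈ A := Finset.min'_mem A hAne
  have haA : a ∈ A := Finset.max'_mem A hAne
  have hma : m ≤ a := Finset.min'_le A a haA
  have hBX : ∀ y ∈ B, y ∈ X := fun y hy => hI.2.1 (Finset.mem_union_right _ hy)
  have hAX : ∀ y ∈ A, y ∈ X := fun y hy => hA.2.1 hy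
  have hbd : ∀ y ∈ X, y - 1 < 2 ^ N := by
    intro y hy
    have := Finset.mem_Icc.mp (hX hy)
    omega
  have haB : a ∉ B := fun h => lt_irrefl a (hAB a haA a h)
  have hub : WithBot.unbotD 0 A.max = a := max_unbot' hAne
  have hsort : (insert a B).sort (· ≤ ·) = a :: L :=
    Finset.sort_insert _ (fun b hb => le_of_lt (hAB a haA b hb)) haB
  have hmemL : ∀ x ∈ L, x ∈ B := fun x hx => (Finset.mem_sort _).mp hx
  have hdl : deltaList N (insert a B) = List.zipWith (treeDelta N) (a :: L) L := by
    unfold deltaList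
    rw [hsort]
    rfl
  have hlist : List.zipWith (treeDelta N) (a :: L) L =
      List.map (fun t => N + 1 - t) (List.zipWith G (a :: L) L) := by
    rw [List.map_zipWith]
    rfl
  -- bound on entries of the size list
  have hGbound : ∀ t ∈ List.zipWith G (a :: L) L, t ≤ N := by
    intro t ht
    obtain ⟨x, hx, y, hy, rfl⟩ := mem_of_mem_zipWith ht
    have hxX : x ∈ X := by
      rcases List.mem_cons.mp hx with h | h
      · exact h ▸ hAX a haA
      · exact hBX x (hmemL x h)
    have hyX : y ∈ X := hBX y (hmemL y hy)
    exact Nat.size_le.mpr (Nat.xor_lt_two_pow (hbd x hxX) (hbd y hyX))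
  rw [hub, hdl, hlist, List.Chain', List.isChain_map, ← List.Chain',
    chain'_congr_mem (S := (· < ·)) (fun s hs t ht => by
      have := hGbound s hs
      constructor
      · intro h
        omega
      · intro h
        omega)]
  -- H-chain for chainAux
  have hge : ∀ x ∈ a :: L, m ≤ x := by
    intro x hx
    rcases List.mem_cons.mp hx with h | h
    · omega
    · exact le_of_lt (hAB m hmA x (hmemL x h))
  have hsorted : List.Pairwise (· < ·) (a :: L) := by
    rw [List.pairwise_cons]
    exact ⟨fun b hb => hAB a haA b (hmemL b hb), (Finset.sortedLT_sort B).pairwise⟩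
  have hHchain : List.Chain' (fun x y => F y = max (F x) (G x y)) (a :: L) := by
    refine (hsorted.imp_of_mem ?_).isChain
    intro x y hx hy hxy
    have hmx : m ≤ x := hge x hx
    simp only [hF, hG]
    exact size_xor_max (by omega) (by omega)
  have hhead : ∀ h ∈ L.head?, F a < F h := by
    intro h hh
    have hhL : h ∈ L := List.mem_of_mem_head? hh
    have hhB : h ∈ B := hmemL h hhL
    have hhA : h ∉ A := fun hmem => lt_irrefl h (hAB h hmem h hhB)
    exact size_lt_of_closed_not_mem hX hA hAne (hBX h hhB) hhA
  rw [chainAux F G L a hHchain hhead, List.Chain', List.isChain_map]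
  haveI : IsTrans ℕ (fun x y => F x < F y) := ⟨fun _ _ _ h1 h2 => lt_trans h1 h2⟩
  rw [List.isChain_iff_pairwise]
  constructor
  · intro hpw b hb b' hb' hlt
    obtain ⟨i, hi⟩ := List.mem_iff_get.mp ((Finset.mem_sort (· ≤ ·)).mpr hb)
    obtain ⟨j, hj⟩ := List.mem_iff_get.mp ((Finset.mem_sort (· ≤ ·)).mpr hb')
    have hij : i < j := by
      rcases lt_trichotomy i j with h | h | h
      · exact h
      · exfalso; rw [h, hj] at hi; omega
      · exfalso
        have := List.pairwise_iff_get.mp ((Finset.sortedLT_sort B).pairwise) j i h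
        rw [hi, hj] at this
        omega
    exact hi ▸ hj ▸ List.pairwise_iff_get.mp hpw i j hij
  · intro hf
    rw [List.pairwise_iff_get]
    intro i j hij
    have hibs := List.pairwise_iff_get.mp ((Finset.sortedLT_sort B).pairwise) i j hij
    exact hf _ (hmemL _ (L.get_mem i)) _ (hmemL _ (L.get_mem j)) hibs

/-- Equivalence of conditions (a3) and (a3*) for left combs: given `A` closed in `X`,
`B ≠ ∅` with `A < B`, and `I = A ∪ B` closed in `X`, the GCA-levels
`δ(max A, b_1) > δ(b_1,b_2) > ⋯ > δ(b_{s-1}, b_s)` are strictly decreasing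
if and only if `A ∪ {b_1,…,b_i}` is closed in `X` for every `1 ≤ i ≤ s`
(i.e. `A ∪ C` is closed for every nonempty initial segment `C` of `B`). -/
theorem leftComb_delta_iff_closed_initial_segments (N : ℕ) (X A B : Finset ℕ)
    (hX : X ⊆ Finset.Icc 1 (2 ^ N))
    (hA : IsClosedInterval N X A) (hB : B.Nonempty)
    (hAB : ∀ a ∈ A, ∀ b ∈ B, a < b)
    (hI : IsClosedInterval N X (A ∪ B)) :
    List.Chain' (· > ·) (deltaList N (insert (WithBot.unbotD 0 A.max) B)) ↔
      ∀ C ⊆ B, C.Nonempty → (∀ b ∈ B, (∃ c ∈ C, b ≤ c) → b ∈ C) →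
        IsClosedInterval N X (A ∪ C) := by
  rw [claimB hX hA hB hAB hI]
  constructor
  · intro hf C hCB hC hdown
    rw [claimA hX hA hB hAB hI hCB hC hdown]
    intro b' hb' hlt
    exact hf _ (hCB (Finset.max'_mem C hC)) b' hb' hlt
  · intro hcl b hb b' hb' hlt
    set C := B.filter (· ≤ b) with hCdef
    have hCB : C ⊆ B := Finset.filter_subset _ _
    have hbC : b ∈ C := Finset.mem_filter.mpr ⟨hb, le_rfl⟩
    have hC : C.Nonempty := ⟨b, hbC⟩
    have hdown : ∀ x ∈ B, (∃ c ∈ C, x ≤ c) → x ∈ C := by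
      rintro x hx ⟨c, hc, hxc⟩
      exact Finset.mem_filter.mpr ⟨hx, le_trans hxc (Finset.mem_filter.mp hc).2⟩
    have hmax : C.max' hC = b :=
      le_antisymm (Finset.max'_le _ _ _ (fun y hy => (Finset.mem_filter.mp hy).2))
        (Finset.le_max' _ _ hbC)
    have h2 := (claimA hX hA hB hAB hI hCB hC hdown).mp (hcl C hCB hC hdown)
    rw [hmax] at h2
    exact h2 b' hb' hlt
end
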